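/- arXiv:2412.06047 — 6 statements merged into one kernel-verified Lean document; each statement's English description precedes it below -/
import Mathlib

section
/- Let α be a type and r a binary relation on α that is finitely branching (for every a, the set {b | r a b} is finite) and terminating (the converse relation fun b a => r a b is well-founded, i.e., there is no infinite forward r-chain). Then for every s, the set {t | ReflTransGen r s t} of elements reachable from s is finite. -/
open Relation

theorem Relation.setOf_reflTransGen_eq_insert_biUnion {α : Type*} (r : α → α → Prop) (s : α) :
    {t | ReflTransGen r s t} = insert s (⋃ b ∈ {b | r s b}, {t | ReflTransGen r b t}) := by
  ext t
  simp only [Set.mem_ofPred_eq, Set.mem_insert_iff, Set.mem_iUnion, exists_prop]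
  rw [ReflTransGen.cases_head_iff, eq_comm]

/-- For a finitely branching and terminating relation `r`, the set of elements
reachable from any `s` is finite. -/
theorem finitelyBranching_terminating_reachable_finite {α : Type*} (r : α → α → Prop)
    (hfb : ∀ a, {b | r a b}.Finite)
    (hterm : WellFounded (fun b a => r a b)) (s : α) :
    {t | Relation.ReflTransGen r s t}.Finite := by
  induction s using hterm.induction with
  | _ s ih =>
    rw [setOf_reflTransGen_eq_insert_biUnion]
    exact ((hfb s).biUnion ih).insert s
end

section
/- Let w be a weight function for terms over a first-order language L, let w_min > 0 be a real number with w₀ ≥ w_min and w(f) ≥ w_min for every function symbol f of arity 0 or arity 1 (all weights non-negative). Then for every term t: w(t) ≥ w_min·(n₀(t) + n₁(t)), and consequently |t| ≤ 2·w_min⁻¹·w(t). -/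
open FirstOrder Language

/-- The size of a term: the number of occurrences of function symbols and variables. -/
def termSize {L : FirstOrder.Language} {α : Type*} : L.Term α → ℕ
  | .var _ => 1
  | .func _ ts => 1 + ∑ i, termSize (ts i)

/-- `arityCount i t` is the number of occurrences in `t` of symbols of arity `i`,
where variable occurrences count as arity `0`. -/
def arityCount {L : FirstOrder.Language} {α : Type*} (i : ℕ) : L.Term α → ℕ
  | .var _ => if i = 0 then 1 else 0
  | @Term.func _ _ l _ ts => (if i = l then 1 else 0) + ∑ j, arityCount i (ts j)

/-- The weight of a term w.r.t. a weight function `w` on function symbols and a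
common variable weight `w₀`: the sum of the weights of all occurrences of
function symbols and variables. -/
def termWeight {L : FirstOrder.Language} {α : Type*}
    (w : ∀ l, L.Functions l → ℝ) (w₀ : ℝ) : L.Term α → ℝ
  | .var _ => w₀
  | @Term.func _ _ l f ts => w l f + ∑ j, termWeight w w₀ (ts j)


-- A symbol of arity `k ≥ 2` brings `k - 1 ≥ 1` extra leaves, so leaves outnumber branching nodes.
theorem termSize_add_one_le {L : FirstOrder.Language} {α : Type*} (t : L.Term α) :
    termSize t + 1 ≤ 2 * arityCount 0 t + arityCount 1 t := by
  induction t with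
  | var => simp [termSize, arityCount]
  | @func l f ts ih =>
    simp only [termSize, arityCount]
    rcases l with _ | _ | l
    · simp
    · simp only [Fin.sum_univ_succ, Fin.sum_univ_zero, Nat.zero_add, if_true,
        Nat.zero_ne_one, if_false]
      have := ih 0
      omega
    · have hargs : ∑ j, (termSize (ts j) + 1) ≤
          ∑ j, (2 * arityCount 0 (ts j) + arityCount 1 (ts j)) :=
        Finset.sum_le_sum fun j _ => ih j
      simp only [Finset.sum_add_distrib, ← Finset.mul_sum, Finset.sum_const, Finset.card_univ,
        Fintype.card_fin, smul_eq_mul, mul_one] at hargs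
      simp only [(Nat.succ_ne_zero _).symm, if_false]
      omega

theorem mul_arityCount_le_termWeight {L : FirstOrder.Language} {α : Type*}
    (w : ∀ l, L.Functions l → ℝ) (w₀ wmin : ℝ) (hnonneg : ∀ l (f : L.Functions l), 0 ≤ w l f)
    (hw₀ : wmin ≤ w₀) (hconst : ∀ f : L.Functions 0, wmin ≤ w 0 f)
    (hunary : ∀ f : L.Functions 1, wmin ≤ w 1 f) (t : L.Term α) :
    wmin * ((arityCount 0 t : ℝ) + arityCount 1 t) ≤ termWeight w w₀ t := by
  induction t with
  | var => simpa [arityCount, termWeight] using hw₀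
  | @func l f ts ih =>
    have hsymbol : wmin * (((if 0 = l then 1 else 0 : ℕ) : ℝ) + (if 1 = l then 1 else 0 : ℕ)) ≤
        w l f := by
      rcases l with _ | _ | l <;> simp [hconst, hunary, hnonneg]
    have hargs := Finset.sum_le_sum fun j (_ : j ∈ Finset.univ) => ih j
    simp only [arityCount, termWeight]
    push_cast at hsymbol hargs ⊢
    rw [← Finset.mul_sum, Finset.sum_add_distrib] at hargs
    linarith

theorem termWeight_bounds_general {L : FirstOrder.Language} {α : Type*}
    (w : ∀ l, L.Functions l → ℝ) (w₀ : ℝ) (wmin : ℝ)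
    (hnonneg : ∀ l (f : L.Functions l), 0 ≤ w l f)
    (hmin : 0 < wmin) (hw₀ : wmin ≤ w₀)
    (hconst : ∀ f : L.Functions 0, wmin ≤ w 0 f)
    (hunary : ∀ f : L.Functions 1, wmin ≤ w 1 f)
    (t : L.Term α) :
    wmin * ((arityCount 0 t : ℝ) + (arityCount 1 t : ℝ)) ≤ termWeight w w₀ t ∧
      (termSize t : ℝ) ≤ 2 * wmin⁻¹ * termWeight w w₀ t := by
  have hweight := mul_arityCount_le_termWeight w w₀ wmin hnonneg hw₀ hconst hunary t
  have hsize : (termSize t : ℝ) ≤ 2 * ((arityCount 0 t : ℝ) + arityCount 1 t) := by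
    have := termSize_add_one_le t
    exact_mod_cast (by omega : termSize t ≤ 2 * (arityCount 0 t + arityCount 1 t))
  refine ⟨hweight, ?_⟩
  calc (termSize t : ℝ) ≤ 2 * wmin⁻¹ * (wmin * ((arityCount 0 t : ℝ) + arityCount 1 t)) := by
        rwa [mul_assoc, inv_mul_cancel_left₀ hmin.ne']
    _ ≤ 2 * wmin⁻¹ * termWeight w w₀ t := by gcongr

/-- If all weights are non-negative, `w_min > 0`, `w₀ ≥ w_min`, and every function
symbol of arity 0 or 1 has weight at least `w_min`, then
`w(t) ≥ w_min·(n₀(t) + n₁(t))` and consequently `|t| ≤ 2·w_min⁻¹·w(t)`. -/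
theorem termWeight_bounds {L : FirstOrder.Language} {α : Type*}
    (w : ∀ l, L.Functions l → ℝ) (w₀ : ℝ) (wmin : ℝ)
    (hnonneg : ∀ l (f : L.Functions l), 0 ≤ w l f) (h₀nonneg : 0 ≤ w₀)
    (hmin : 0 < wmin) (hw₀ : wmin ≤ w₀)
    (hconst : ∀ f : L.Functions 0, wmin ≤ w 0 f)
    (hunary : ∀ f : L.Functions 1, wmin ≤ w 1 f)
    (t : L.Term α) :
    wmin * ((arityCount 0 t : ℝ) + (arityCount 1 t : ℝ)) ≤ termWeight w w₀ t ∧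
      (termSize t : ℝ) ≤ 2 * wmin⁻¹ * termWeight w w₀ t :=
  termWeight_bounds_general w w₀ wmin hnonneg hmin hw₀ hconst hunary t
end

section
/- Let w be a weight function for terms over a first-order language L and let w_min, w_max be real numbers with 0 < w_min, such that w₀ ≥ w_min and w(f) ≥ w_min for every function symbol f of arity 0 or arity 1, and such that w₀ ≤ w_max and w(f) ≤ w_max for every function symbol f. Then for all terms s and t with w(t) ≤ w(s): |t| ≤ 2·w_min⁻¹·w_max·|s|. In particular, the size of a term is linearly bounded by the size of any term of at least equal weight. -/
open FirstOrder Language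

/-!
Summing `2 - arity` over the symbol occurrences of a term `t` (variables having arity `0`) gives
`|t| + 1`, since every occurrence except the root is an argument of exactly one other. An occurrence
of arity `l` weighs at least `(2 - l) * wmin / 2`: for `l ≤ 1` by the lower bounds, for `l ≥ 2`
because the left side is non-positive. Hence `wmin * (|t| + 1) ≤ 2 * w(t)`, while
`w(s) ≤ wmax * |s|`.
-/

section Bounds

variable {L : FirstOrder.Language} {α : Type*} (w : ∀ l, L.Functions l → ℝ) {w₀ : ℝ}

lemma two_sub_arity_mul_le {wmin : ℝ} (hwmin : 0 ≤ wmin)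
    (hnonneg : ∀ l (f : L.Functions l), 0 ≤ w l f)
    (hconst : ∀ f : L.Functions 0, wmin ≤ w 0 f)
    (hunary : ∀ f : L.Functions 1, wmin ≤ w 1 f)
    (l : ℕ) (f : L.Functions l) : (2 - l : ℝ) * wmin ≤ 2 * w l f := by
  match l, f with
  | 0, f => have := hconst f; push_cast; linarith
  | 1, f => have := hunary f; have := hnonneg 1 f; push_cast; linarith
  | n + 2, f =>
    have := hnonneg _ f
    push_cast
    nlinarith [(n.cast_nonneg : (0 : ℝ) ≤ n)]

lemma mul_termSize_add_one_le_two_mul_termWeight {wmin : ℝ} (hw₀min : wmin ≤ w₀)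
    (harity : ∀ l (f : L.Functions l), (2 - l : ℝ) * wmin ≤ 2 * w l f) (t : L.Term α) :
    wmin * (termSize t + 1) ≤ 2 * termWeight w w₀ t := by
  induction t with
  | var x =>
    simp only [termSize, termWeight, Nat.cast_one]
    linarith
  | @func l f ts ih =>
    have hsum : ∑ i, wmin * (termSize (ts i) + 1) ≤ ∑ i, 2 * termWeight w w₀ (ts i) :=
      Finset.sum_le_sum fun i _ => ih i
    simp only [mul_add, mul_one, Finset.sum_add_distrib, Finset.sum_const, Finset.card_univ,
      Fintype.card_fin, nsmul_eq_mul, ← Finset.mul_sum] at hsum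
    simp only [termSize, termWeight, Nat.cast_add, Nat.cast_one, Nat.cast_sum]
    linarith [harity l f]

lemma termWeight_le_mul_termSize {wmax : ℝ} (hw₀max : w₀ ≤ wmax)
    (hmax : ∀ l (f : L.Functions l), w l f ≤ wmax) (s : L.Term α) :
    termWeight w w₀ s ≤ wmax * termSize s := by
  induction s with
  | var x => simpa [termSize, termWeight] using hw₀max
  | @func l f ts ih =>
    simp only [termSize, termWeight, Nat.cast_add, Nat.cast_one, Nat.cast_sum, mul_add, mul_one,
      Finset.mul_sum]
    exact add_le_add (hmax l f) (Finset.sum_le_sum fun i _ => ih i)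

end Bounds

theorem termSize_le_of_termWeight_le_general {L : FirstOrder.Language} {α β : Type*}
    (w : ∀ l, L.Functions l → ℝ) (w₀ : ℝ) (wmin wmax : ℝ)
    (hnonneg : ∀ l (f : L.Functions l), 0 ≤ w l f)
    (hmin : 0 < wmin) (hw₀min : wmin ≤ w₀)
    (hconst : ∀ f : L.Functions 0, wmin ≤ w 0 f)
    (hunary : ∀ f : L.Functions 1, wmin ≤ w 1 f)
    (hw₀max : w₀ ≤ wmax) (hmax : ∀ l (f : L.Functions l), w l f ≤ wmax)
    (s : L.Term α) (t : L.Term β)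
    (hwt : termWeight w w₀ t ≤ termWeight w w₀ s) :
    (termSize t : ℝ) ≤ 2 * wmin⁻¹ * wmax * (termSize s : ℝ) := by
  have hlow := mul_termSize_add_one_le_two_mul_termWeight w hw₀min
    (two_sub_arity_mul_le w hmin.le hnonneg hconst hunary) t
  have hup := termWeight_le_mul_termSize w hw₀max hmax s
  rw [mul_assoc, mul_assoc, ← div_eq_inv_mul, mul_div_assoc', le_div_iff₀ hmin]
  linarith

/-- If all weights are non-negative, `0 < w_min`, variables and function symbols of
arity 0 or 1 have weight at least `w_min`, and all weights are at most `w_max`, then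
for all terms `s, t` with `w(t) ≤ w(s)` we have `|t| ≤ 2·w_min⁻¹·w_max·|s|`. -/
theorem termSize_le_of_termWeight_le {L : FirstOrder.Language} {α β : Type*}
    (w : ∀ l, L.Functions l → ℝ) (w₀ : ℝ) (wmin wmax : ℝ)
    (hnonneg : ∀ l (f : L.Functions l), 0 ≤ w l f) (h₀nonneg : 0 ≤ w₀)
    (hmin : 0 < wmin) (hw₀min : wmin ≤ w₀)
    (hconst : ∀ f : L.Functions 0, wmin ≤ w 0 f)
    (hunary : ∀ f : L.Functions 1, wmin ≤ w 1 f)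
    (hw₀max : w₀ ≤ wmax) (hmax : ∀ l (f : L.Functions l), w l f ≤ wmax)
    (s : L.Term α) (t : L.Term β)
    (hwt : termWeight w w₀ t ≤ termWeight w w₀ s) :
    (termSize t : ℝ) ≤ 2 * wmin⁻¹ * wmax * (termSize s : ℝ) :=
  termSize_le_of_termWeight_le_general w w₀ wmin wmax hnonneg hmin hw₀min hconst hunary hw₀max hmax
    s t hwt
end

section
/- Let σ be a finite type and P a multivariate polynomial over ℕ in indeterminates indexed by σ (P : MvPolynomial σ ℕ) that depends on all its indeterminates, i.e., for every i ∈ σ there is a monomial in the support of P in which the indeterminate i occurs with positive exponent (equivalently, i ∈ P.vars for all i). Then for every assignment a : σ → ℕ with 2 ≤ a i for all i, we have Σ_{i} a i ≤ MvPolynomial.eval a P. -/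
/-!
Every variable occurs in some monomial of `P`, so the variables are covered by the supports of
the monomials. On a single monomial `x^d`, values `≥ 2` make the sum of its variables at most
their product, which is at most the monomial's value; and a nonzero natural coefficient is `≥ 1`.
-/

open Finset MvPolynomial

namespace Finset

theorem sum_le_prod_of_two_le {ι R : Type*} [CommSemiring R] [LinearOrder R]
    [IsStrictOrderedRing R] (s : Finset ι) {a : ι → R} (ha : ∀ i ∈ s, 2 ≤ a i) :
    ∑ i ∈ s, a i ≤ ∏ i ∈ s, a i := by
  induction s using Finset.cons_induction with
  | empty => simp
  | cons x s hx ih =>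
    rw [sum_cons, prod_cons]
    have hx2 : 2 ≤ a x := ha x (mem_cons_self x s)
    have hs2 : ∀ i ∈ s, 2 ≤ a i := fun i hi => ha i (mem_cons_of_mem hi)
    rcases s.eq_empty_or_nonempty with rfl | ⟨j, hj⟩
    · simp
    have hsum : 2 ≤ ∑ i ∈ s, a i :=
      (hs2 j hj).trans <| single_le_sum (fun i hi => zero_le_two.trans (hs2 i hi)) hj
    calc a x + ∑ i ∈ s, a i ≤ a x + ∏ i ∈ s, a i := by grw [ih hs2]
      _ ≤ a x * ∏ i ∈ s, a i := add_le_mul hx2 (hsum.trans (ih hs2))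

theorem sum_biUnion_le {ι β M : Type*} [DecidableEq β] [AddCommMonoid M] [PartialOrder M]
    [IsOrderedAddMonoid M] [CanonicallyOrderedAdd M]
    (s : Finset ι) (t : ι → Finset β) (f : β → M) :
    ∑ x ∈ s.biUnion t, f x ≤ ∑ i ∈ s, ∑ x ∈ t i, f x := by
  classical
  induction s using Finset.induction_on with
  | empty => simp
  | insert i s hi ih =>
    rw [biUnion_insert, sum_insert hi]
    calc ∑ x ∈ t i ∪ s.biUnion t, f x
        ≤ ∑ x ∈ t i ∪ s.biUnion t, f x + ∑ x ∈ t i ∩ s.biUnion t, f x := le_self_add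
      _ = ∑ x ∈ t i, f x + ∑ x ∈ s.biUnion t, f x := sum_union_inter
      _ ≤ ∑ x ∈ t i, f x + ∑ j ∈ s, ∑ x ∈ t j, f x := by grw [ih]

end Finset

theorem Finsupp.sum_support_le_prod_pow {σ R : Type*} [CommSemiring R] [LinearOrder R]
    [IsStrictOrderedRing R] (d : σ →₀ ℕ) {a : σ → R} (ha : ∀ i ∈ d.support, 2 ≤ a i) :
    ∑ i ∈ d.support, a i ≤ ∏ i ∈ d.support, a i ^ d i :=
  (sum_le_prod_of_two_le _ ha).trans <| prod_le_prod
    (fun i hi => zero_le_two.trans (ha i hi))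
    (fun i hi => le_self_pow₀ (one_le_two.trans (ha i hi)) (Finsupp.mem_support_iff.mp hi))

theorem sum_le_eval_of_depends_on_all_vars_general {σ : Type*} [Fintype σ]
    (P : MvPolynomial σ ℕ) (hdep : ∀ i : σ, i ∈ P.vars)
    (a : σ → ℕ) (ha : ∀ i, 2 ≤ a i) :
    ∑ i, a i ≤ MvPolynomial.eval a P := by
  classical
  have hvars : P.vars = univ := eq_univ_of_forall hdep
  calc ∑ i, a i = ∑ i ∈ P.support.biUnion Finsupp.support, a i := by
        rw [← vars_eq_support_biUnion_support, hvars]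
    _ ≤ ∑ d ∈ P.support, ∑ i ∈ d.support, a i := sum_biUnion_le _ _ _
    _ ≤ ∑ d ∈ P.support, P.coeff d * ∏ i ∈ d.support, a i ^ d i := by
        refine sum_le_sum fun d hd => ?_
        have hcoeff : 0 < P.coeff d := Nat.pos_of_ne_zero (mem_support_iff.mp hd)
        exact (d.sum_support_le_prod_pow fun i _ => ha i).trans (Nat.le_mul_of_pos_left _ hcoeff)
    _ = MvPolynomial.eval a P := (eval_eq a P).symm

/-- If a multivariate polynomial `P` over `ℕ` depends on all its indeterminates
(i.e. every `i` occurs in `P.vars`), then for every assignment `a` with `a i ≥ 2`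
for all `i`, the value of `P` at `a` is at least the sum of the `a i`. -/
theorem sum_le_eval_of_depends_on_all_vars {σ : Type*} [Fintype σ] [DecidableEq σ]
    (P : MvPolynomial σ ℕ) (hdep : ∀ i : σ, i ∈ P.vars)
    (a : σ → ℕ) (ha : ∀ i, 2 ≤ a i) :
    ∑ i, a i ≤ MvPolynomial.eval a P :=
  sum_le_eval_of_depends_on_all_vars_general P hdep a ha
end

section
/- For every term t over a first-order language L: if the nu-size of t is m (‖t‖ = m) and the depth of t is n (dp(t) = n), then the size of t satisfies |t| ≤ m + m·n. -/
open FirstOrder Language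

/-- The nu-size of a term: the number of occurrences of non-unary function symbols
and variables (i.e. occurrences of symbols of arity ≠ 1, variables counted). -/
def nuSize {L : FirstOrder.Language} {α : Type*} : L.Term α → ℕ
  | .var _ => 1
  | @Term.func _ _ l _ ts => (if l = 1 then 0 else 1) + ∑ j, nuSize (ts j)

/-- The depth of a term: `dp(x) = 0` for variables, `dp(c) = 0` for constants, and
`dp(f(t₁,…,tₙ)) = 1 + max_i dp(tᵢ)` for `n ≥ 1`. -/
def termDepth {L : FirstOrder.Language} {α : Type*} : L.Term α → ℕ
  | .var _ => 0
  | .func _ ts => Finset.univ.sup fun i => 1 + termDepth (ts i)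

/-!
By induction, `|t| ≤ ‖t‖ · (dp(t) + 1)`. A unary symbol on top adds one to the size and
one to the depth but nothing to the nu-size, so the right-hand side grows by `‖t‖ ≥ 1`.
A non-unary symbol on top of `t₁, …, tₖ` adds one to both sizes, and each `‖tᵢ‖ · (dp(tᵢ) + 1)`
is at most `‖tᵢ‖ · dp(t)`.
-/

section

variable {L : FirstOrder.Language} {α : Type*}

lemma one_le_nuSize (t : L.Term α) : 1 ≤ nuSize t := by
  induction t with
  | var _ => simp [nuSize]
  | @func l f ts ih =>
    rcases eq_or_ne l 1 with rfl | hl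
    · simpa [nuSize] using ih 0
    · simp [nuSize, hl]

lemma termDepth_lt_termDepth_func {l : ℕ} (f : L.Functions l) (ts : Fin l → L.Term α)
    (i : Fin l) : termDepth (ts i) < termDepth (Term.func f ts) :=
  Finset.le_sup (f := fun i => 1 + termDepth (ts i)) (Finset.mem_univ i) |>.trans_lt' (by omega)

lemma termSize_le_nuSize_mul_termDepth_add_one (t : L.Term α) :
    termSize t ≤ nuSize t * (termDepth t + 1) := by
  induction t with
  | var _ => simp [termSize, nuSize, termDepth]
  | @func l f ts ih =>
    have hd := termDepth_lt_termDepth_func f ts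
    generalize termDepth (Term.func f ts) = d at hd ⊢
    rcases eq_or_ne l 1 with rfl | hl
    · have hnu := one_le_nuSize (ts 0)
      have hmono : nuSize (ts 0) * (termDepth (ts 0) + 1) ≤ nuSize (ts 0) * d :=
        Nat.mul_le_mul_left _ (hd 0)
      simp only [termSize, nuSize, reduceIte, zero_add, Fin.sum_univ_one]
      linarith [ih 0]
    · have hargs : ∑ i, termSize (ts i) ≤ (∑ i, nuSize (ts i)) * d := by
        rw [Finset.sum_mul]
        gcongr with i
        exact (ih i).trans (Nat.mul_le_mul_left _ (hd i))
      simp only [termSize, nuSize, if_neg hl]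
      generalize ∑ i, nuSize (ts i) = s at hargs ⊢
      nlinarith

end

/-- If `‖t‖ = m` and `dp(t) = n`, then `|t| ≤ m + m·n`. -/
theorem termSize_le_nuSize_mul_depth {L : FirstOrder.Language} {α : Type*}
    (t : L.Term α) (m n : ℕ) (hm : nuSize t = m) (hn : termDepth t = n) :
    termSize t ≤ m + m * n := by
  subst hm hn
  simpa [mul_add, add_comm] using termSize_le_nuSize_mul_termDepth_add_one t
end

section
/- Let s and t be terms over a first-order language L with variables from a type α such that |s| > |t| and |s|_x ≥ |t|_x for every variable x. Then for every substitution σ : α → L.Term β we have |s.subst σ| > |t.subst σ|. (This is the closure-under-substitution property of the size-based reduction order: s ≻ t iff |s| > |t| and |s|_x ≥ |t|_x for all variables x.) -/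
/-!
Substituting `σ` into `t` replaces each of the `|t|_x` occurrences of `x` by `σ x`, so
`|t.subst σ| = |t| + ∑ₓ |t|_x * (|σ x| - 1)`. The right-hand side is monotone in `|t|` and in
every `|t|_x`, and strictly so in `|t|`.
-/

open FirstOrder Language

/-- `varCount x t` is the number of occurrences of the variable `x` in `t`. -/
def varCount {L : FirstOrder.Language} {α : Type*} [DecidableEq α] (x : α) :
    L.Term α → ℕ
  | .var y => if y = x then 1 else 0
  | .func _ ts => ∑ j, varCount x (ts j)

section

variable {L : FirstOrder.Language} {α β : Type*}

lemma one_le_termSize (t : L.Term α) : 1 ≤ termSize t := by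
  cases t <;> simp [termSize]

lemma termSize_subst_eq_add_sum [DecidableEq α] (σ : α → L.Term β) {A : Finset α} :
    ∀ t : L.Term α, t.varFinset ⊆ A →
      termSize (t.subst σ) = termSize t + ∑ x ∈ A, varCount x t * (termSize (σ x) - 1)
  | .var y, hA => by
    have hy : y ∈ A := hA (by simp [Term.varFinset])
    have := one_le_termSize (σ y)
    simp only [Term.subst, termSize, varCount, ite_mul, one_mul, zero_mul,
      Finset.sum_ite_eq, if_pos hy]
    omega
  | .func f ts, hA => by
    have ih i := termSize_subst_eq_add_sum σ (ts i)
      ((Finset.subset_biUnion_of_mem _ (Finset.mem_univ i)).trans hA)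
    simp only [Term.subst, termSize, varCount, ih, Finset.sum_add_distrib, Finset.sum_mul]
    rw [Finset.sum_comm (s := A)]
    ring

end

/-- Closure under substitution of the size-based reduction order: if `|s| > |t|`
and `|s|_x ≥ |t|_x` for every variable `x`, then `|s.subst σ| > |t.subst σ|` for
every substitution `σ`. -/
theorem termSize_subst_lt {L : FirstOrder.Language} {α β : Type*} [DecidableEq α]
    (s t : L.Term α) (hsize : termSize t < termSize s)
    (hvar : ∀ x : α, varCount x t ≤ varCount x s)
    (σ : α → L.Term β) :
    termSize (t.subst σ) < termSize (s.subst σ) := by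
  have hs : s.varFinset ⊆ s.varFinset ∪ t.varFinset := Finset.subset_union_left
  have ht : t.varFinset ⊆ s.varFinset ∪ t.varFinset := Finset.subset_union_right
  rw [termSize_subst_eq_add_sum σ t ht, termSize_subst_eq_add_sum σ s hs]
  have hweight := Finset.sum_le_sum (s := s.varFinset ∪ t.varFinset)
    fun x _ => Nat.mul_le_mul_right (termSize (σ x) - 1) (hvar x)
  omega
end
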